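/- Let (X,d) be a compact metric space and F = {f₁,…,f_k} a finite family of continuous surjective self-maps of X, with iterates ω_n, and let f = f_k∘f_{k-1}∘⋯∘f₁. Then the non-autonomous system (X,F) is Li-Yorke chaotic (there exists an uncountable set S ⊆ X such that every pair of distinct points x,y ∈ S satisfies liminf_{n→∞} d(ω_n(x),ω_n(y)) = 0 and limsup_{n→∞} d(ω_n(x),ω_n(y)) > 0) if and only if the autonomous system (X,f) is Li-Yorke chaotic (there exists an uncountable set S ⊆ X such that every pair of distinct points x,y ∈ S satisfies liminf_{n→∞} d(fⁿ(x),fⁿ(y)) = 0 and limsup_{n→∞} d(fⁿ(x),fⁿ(y)) > 0). -/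
import Mathlib


open Filter Metric Set Function

/-- The `n`-th iterate `ω_n` of the non-autonomous system generated by the finite family
`f 0, f 1, …, f k` applied cyclically: `ω_0 = id` and `ω_{n+1} = f (n % (k+1)) ∘ ω_n`,
so that `ω_n = f_{((n-1) mod (k+1)) + 1} ∘ ⋯ ∘ f_2 ∘ f_1` in the paper's (1-based) notation.
The induced autonomous map `f = f_k ∘ ⋯ ∘ f_1` is `omegaIt f (k+1)`. -/
def omegaIt {X : Type*} {k : ℕ} (f : Fin (k + 1) → X → X) : ℕ → X → X
  | 0 => id
  | n + 1 => fun x => f ⟨n % (k + 1), Nat.mod_lt _ (Nat.succ_pos k)⟩ (omegaIt f n x)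

section Aux

variable {X : Type*} [MetricSpace X] {k : ℕ}

set_option linter.unusedSectionVars false

lemma omegaIt_continuous (f : Fin (k + 1) → X → X) (hc : ∀ i, Continuous (f i)) (n : ℕ) :
    Continuous (omegaIt f n) := by
  induction n with
  | zero => exact continuous_id
  | succ n ih => exact (hc _).comp ih

lemma omegaIt_add_period (f : Fin (k + 1) → X → X) (r : ℕ) (y : X) :
    omegaIt f ((k + 1) + r) y = omegaIt f r (omegaIt f (k + 1) y) := by
  induction r with
  | zero => simp [omegaIt]
  | succ r ih =>
    have h : (k + 1) + (r + 1) = ((k + 1) + r) + 1 := by omega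
    rw [h]
    show f ⟨((k+1)+r) % (k + 1), _⟩ (omegaIt f ((k+1)+r) y) = _
    rw [ih]
    have hm : ((k + 1) + r) % (k + 1) = r % (k + 1) := Nat.add_mod_left _ _
    exact congrFun (congrArg f (Fin.ext hm)) _

lemma omegaIt_mul (f : Fin (k + 1) → X → X) (x : X) (m r : ℕ) :
    omegaIt f ((k + 1) * m + r) x = omegaIt f r ((omegaIt f (k + 1))^[m] x) := by
  induction m generalizing r with
  | zero => simp
  | succ m ih =>
    have h : (k + 1) * (m + 1) + r = (k + 1) * m + ((k + 1) + r) := by ring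
    rw [h, ih ((k + 1) + r), omegaIt_add_period, Function.iterate_succ_apply']

/-- The "tail" composition `f_k ∘ ⋯ ∘ f_{k+1-j}` (`j` maps). -/
def tailAux (f : Fin (k + 1) → X → X) : ℕ → X → X
  | 0 => id
  | j + 1 => fun x => tailAux f j (f ⟨(k - j) % (k + 1), Nat.mod_lt _ (Nat.succ_pos k)⟩ x)

lemma tailAux_continuous (f : Fin (k + 1) → X → X) (hc : ∀ i, Continuous (f i)) (j : ℕ) :
    Continuous (tailAux f j) := by
  induction j with
  | zero => exact continuous_id
  | succ j ih => exact ih.comp (hc _)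

lemma tail_spec (f : Fin (k + 1) → X → X) (x : X) (m : ℕ) :
    ∀ j ≤ k + 1, (omegaIt f (k + 1))^[m + 1] x
      = tailAux f j (omegaIt f ((k + 1) * m + (k + 1 - j)) x) := by
  intro j
  induction j with
  | zero =>
    intro _
    have h : (k + 1) * m + (k + 1 - 0) = (k + 1) * (m + 1) + 0 := by ring_nf; omega
    rw [h, omegaIt_mul f x (m + 1) 0]
    rfl
  | succ j ih =>
    intro hj
    have hj' : j ≤ k := by omega
    rw [ih (by omega)]
    show _ = tailAux f j (f ⟨(k - j) % (k + 1), _⟩ (omegaIt f ((k + 1) * m + (k + 1 - (j + 1))) x))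
    congr 1
    have h1 : k + 1 - j = ((k + 1) * m + (k + 1 - (j + 1))) + 1 - (k + 1) * m := by omega
    have h2 : (k + 1) * m + (k + 1 - j) = ((k + 1) * m + (k + 1 - (j + 1))) + 1 := by omega
    rw [h2]
    show f ⟨((k + 1) * m + (k + 1 - (j + 1))) % (k + 1), _⟩ _ = _
    have hm : ((k + 1) * m + (k + 1 - (j + 1))) % (k + 1) = (k - j) % (k + 1) := by
      rw [Nat.mul_add_mod]
      congr 1
      omega
    exact congrFun (congrArg f (Fin.ext hm)) _

/-- A uniform `δ` working for finitely many continuous maps on a compact space. -/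
lemma exists_delta [CompactSpace X] (g : ℕ → X → X) (hg : ∀ r, Continuous (g r)) (N : ℕ)
    {ε : ℝ} (hε : 0 < ε) :
    ∃ δ > 0, ∀ r < N, ∀ a b : X, dist a b < δ → dist (g r a) (g r b) < ε := by
  induction N with
  | zero => exact ⟨1, one_pos, fun r hr => absurd hr (Nat.not_lt_zero r)⟩
  | succ N ih =>
    obtain ⟨δ₁, hδ₁, h1⟩ := ih
    obtain ⟨δ₂, hδ₂, h2⟩ := Metric.uniformContinuous_iff.mp
      (CompactSpace.uniformContinuous_of_continuous (hg N)) ε hε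
    refine ⟨min δ₁ δ₂, lt_min hδ₁ hδ₂, fun r hr a b hab => ?_⟩
    rcases Nat.lt_succ_iff_lt_or_eq.mp hr with h | h
    · exact h1 r h a b (hab.trans_le (min_le_left _ _))
    · subst h; exact h2 (hab.trans_le (min_le_right _ _))

end Aux

/-- the non-autonomous system `(X, F)` is Li-Yorke chaotic iff the
autonomous system `(X, f)`, `f = f_k ∘ ⋯ ∘ f_1`, is Li-Yorke chaotic. -/
theorem liYorkeChaotic_nonautonomous_iff_autonomous
    {X : Type*} [MetricSpace X] [CompactSpace X] {k : ℕ} (f : Fin (k + 1) → X → X)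
    (hc : ∀ i, Continuous (f i)) (hs : ∀ i, Function.Surjective (f i)) :
    (∃ S : Set X, ¬ S.Countable ∧ ∀ x ∈ S, ∀ y ∈ S, x ≠ y →
        Filter.liminf (fun n : ℕ => dist (omegaIt f n x) (omegaIt f n y)) Filter.atTop = 0 ∧
        0 < Filter.limsup (fun n : ℕ => dist (omegaIt f n x) (omegaIt f n y)) Filter.atTop) ↔
    (∃ S : Set X, ¬ S.Countable ∧ ∀ x ∈ S, ∀ y ∈ S, x ≠ y →
        Filter.liminf (fun n : ℕ =>
          dist ((omegaIt f (k + 1))^[n] x) ((omegaIt f (k + 1))^[n] y)) Filter.atTop = 0 ∧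
        0 < Filter.limsup (fun n : ℕ =>
          dist ((omegaIt f (k + 1))^[n] x) ((omegaIt f (k + 1))^[n] y)) Filter.atTop) := by
  -- global bound on distances
  obtain ⟨C, hC⟩ := Metric.isBounded_iff.mp (isCompact_univ : IsCompact (Set.univ : Set X)).isBounded
  have hbd : ∀ a b : X, dist a b ≤ C := fun a b => hC (mem_univ a) (mem_univ b)
  -- abbreviations and boundedness facts for any pair
  have bddD : ∀ (u : ℕ → ℝ), (∀ n, 0 ≤ u n) → (∀ n, u n ≤ C) →
      (Filter.atTop.IsBoundedUnder (· ≤ ·) u ∧ Filter.atTop.IsBoundedUnder (· ≥ ·) u ∧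
       Filter.atTop.IsCoboundedUnder (· ≤ ·) u ∧ Filter.atTop.IsCoboundedUnder (· ≥ ·) u) := by
    intro u h0 h1
    have hle : Filter.atTop.IsBoundedUnder (· ≤ ·) u := Filter.isBoundedUnder_of ⟨C, h1⟩
    have hge : Filter.atTop.IsBoundedUnder (· ≥ ·) u := Filter.isBoundedUnder_of ⟨0, h0⟩
    exact ⟨hle, hge, hge.isCoboundedUnder_le, hle.isCoboundedUnder_ge⟩
  constructor
  · -- non-autonomous ⇒ autonomous
    rintro ⟨S, hS, h⟩
    refine ⟨S, hS, fun x hx y hy hxy => ?_⟩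
    obtain ⟨h1, h2⟩ := h x hx y hy hxy
    set D : ℕ → ℝ := fun n => dist (omegaIt f n x) (omegaIt f n y) with hD
    set E : ℕ → ℝ := fun m => dist ((omegaIt f (k + 1))^[m] x) ((omegaIt f (k + 1))^[m] y) with hE
    obtain ⟨hDle, hDge, hDcole, hDcoge⟩ := bddD D (fun n => dist_nonneg) (fun n => hbd _ _)
    obtain ⟨hEle, hEge, hEcole, hEcoge⟩ := bddD E (fun n => dist_nonneg) (fun n => hbd _ _)
    constructor
    · -- liminf E = 0
      refine le_antisymm ?_ (Filter.le_liminf_of_le hEcoge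
        (Filter.Eventually.of_forall fun n => dist_nonneg))
      have key : ∀ ε > (0 : ℝ), Filter.liminf E Filter.atTop ≤ ε := by
        intro ε hε
        obtain ⟨δ, hδ, hδ'⟩ := exists_delta (tailAux f) (tailAux_continuous f hc) (k + 2) hε
        have hfreq : ∃ᶠ n in Filter.atTop, D n < δ :=
          Filter.frequently_lt_of_liminf_lt hDcoge (h1 ▸ hδ)
        refine Filter.liminf_le_of_frequently_le ?_ hEge
        rw [Filter.frequently_atTop] at hfreq ⊢
        intro N
        obtain ⟨n, hn, hn'⟩ := hfreq ((k + 1) * N)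
        -- write n = (k+1)*m + r with r < k+1
        set m := n / (k + 1) with hm
        set r := n % (k + 1) with hr
        have hrk : r < k + 1 := Nat.mod_lt _ (Nat.succ_pos k)
        have hnmr : n = (k + 1) * m + r := (Nat.div_add_mod n (k + 1)).symm
        have hmN : N ≤ m + 1 := by
          have : (k + 1) * N ≤ (k + 1) * m + r := hnmr ▸ hn
          nlinarith [hrk]
        refine ⟨m + 1, hmN, le_of_lt ?_⟩
        have hj : k + 1 - (k + 1 - r) = r := by omega
        have hx' := tail_spec f x m (k + 1 - r) (by omega)
        have hy' := tail_spec f y m (k + 1 - r) (by omega)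
        rw [hj] at hx' hy'
        rw [← hnmr] at hx' hy'
        show dist ((omegaIt f (k + 1))^[m + 1] x) ((omegaIt f (k + 1))^[m + 1] y) < ε
        rw [hx', hy']
        exact hδ' (k + 1 - r) (by omega) _ _ hn'
      by_contra hne
      push_neg at hne
      exact absurd (key _ (half_pos hne)) (not_le.mpr (half_lt_self hne))
    · -- 0 < limsup E
      by_contra hns
      push_neg at hns
      -- then E → 0, hence D → 0, contradicting 0 < limsup D
      obtain ⟨c, hc0, hcD⟩ : ∃ c > 0, ∃ᶠ n in Filter.atTop, c < D n := by
        refine ⟨Filter.limsup D Filter.atTop / 2, half_pos h2, ?_⟩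
        exact Filter.frequently_lt_of_lt_limsup hDcole (half_lt_self h2)
      obtain ⟨δ, hδ, hδ'⟩ := exists_delta (omegaIt f) (omegaIt_continuous f hc) (k + 1) hc0
      have hev : ∀ᶠ m in Filter.atTop, E m < δ :=
        Filter.eventually_lt_of_limsup_lt (lt_of_le_of_lt hns hδ) hEle
      rw [Filter.eventually_atTop] at hev
      obtain ⟨M, hM⟩ := hev
      rw [Filter.frequently_atTop] at hcD
      obtain ⟨n, hn, hn'⟩ := hcD ((k + 1) * M)
      set m := n / (k + 1) with hm
      set r := n % (k + 1) with hr
      have hrk : r < k + 1 := Nat.mod_lt _ (Nat.succ_pos k)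
      have hnmr : n = (k + 1) * m + r := (Nat.div_add_mod n (k + 1)).symm
      have hmM : M ≤ m := by
        have : (k + 1) * M ≤ (k + 1) * m + r := hnmr ▸ hn
        nlinarith [hrk]
      have hx' := omegaIt_mul f x m r
      have hy' := omegaIt_mul f y m r
      have : D n < c := by
        show dist (omegaIt f n x) (omegaIt f n y) < c
        rw [hnmr, hx', hy']
        exact hδ' r hrk _ _ (hM m hmM)
      exact absurd hn' (not_lt.mpr this.le)
  · -- autonomous ⇒ non-autonomous
    rintro ⟨S, hS, h⟩
    refine ⟨S, hS, fun x hx y hy hxy => ?_⟩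
    obtain ⟨h1, h2⟩ := h x hx y hy hxy
    set D : ℕ → ℝ := fun n => dist (omegaIt f n x) (omegaIt f n y) with hD
    set E : ℕ → ℝ := fun m => dist ((omegaIt f (k + 1))^[m] x) ((omegaIt f (k + 1))^[m] y) with hE
    obtain ⟨hDle, hDge, hDcole, hDcoge⟩ := bddD D (fun n => dist_nonneg) (fun n => hbd _ _)
    obtain ⟨hEle, hEge, hEcole, hEcoge⟩ := bddD E (fun n => dist_nonneg) (fun n => hbd _ _)
    have hsub : ∀ m, D ((k + 1) * m) = E m := by
      intro m
      show dist (omegaIt f ((k + 1) * m) x) (omegaIt f ((k + 1) * m) y) = _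
      have hx' := omegaIt_mul f x m 0
      have hy' := omegaIt_mul f y m 0
      rw [Nat.add_zero] at hx' hy'
      rw [hx', hy']
      rfl
    constructor
    · -- liminf D = 0
      refine le_antisymm ?_ (Filter.le_liminf_of_le hDcoge
        (Filter.Eventually.of_forall fun n => dist_nonneg))
      have key : ∀ ε > (0 : ℝ), Filter.liminf D Filter.atTop ≤ ε := by
        intro ε hε
        have hfreq : ∃ᶠ m in Filter.atTop, E m < ε :=
          Filter.frequently_lt_of_liminf_lt hEcoge (h1 ▸ hε)
        refine Filter.liminf_le_of_frequently_le ?_ hDge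
        rw [Filter.frequently_atTop] at hfreq ⊢
        intro N
        obtain ⟨m, hm, hm'⟩ := hfreq N
        refine ⟨(k + 1) * m, le_trans hm (Nat.le_mul_of_pos_left m (Nat.succ_pos k)), ?_⟩
        rw [hsub m]; exact hm'.le
      by_contra hne
      push_neg at hne
      exact absurd (key _ (half_pos hne)) (not_le.mpr (half_lt_self hne))
    · -- 0 < limsup D
      have hfreq : ∃ᶠ m in Filter.atTop, Filter.limsup E Filter.atTop / 2 < E m :=
        Filter.frequently_lt_of_lt_limsup hEcole (half_lt_self h2)
      have hfreq' : ∃ᶠ n in Filter.atTop, Filter.limsup E Filter.atTop / 2 ≤ D n := by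
        rw [Filter.frequently_atTop] at hfreq ⊢
        intro N
        obtain ⟨m, hm, hm'⟩ := hfreq N
        exact ⟨(k + 1) * m, le_trans hm (Nat.le_mul_of_pos_left m (Nat.succ_pos k)),
          (hsub m).symm ▸ hm'.le⟩
      exact lt_of_lt_of_le (half_pos h2) (Filter.le_limsup_of_frequently_le hfreq' hDle)
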